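/- If a cubic graph G with m edges has a Petersen-colouring, then scc(G) ≤ (7/5)m. -/

import Mathlib

open scoped Classical

namespace ShortCycleCovers

variable {V : Type*}

/-- A cycle in `G`: a connected 2-regular subgraph. -/
def IsCycleSub {G : SimpleGraph V} (C : G.Subgraph) : Prop :=
  C.Connected ∧ ∀ v ∈ C.verts, (C.neighborSet v).ncard = 2

/-- A cycle cover of `G`: a family of cycles covering every edge at least once. -/
def IsCycleCover (G : SimpleGraph V) (𝒞 : Multiset G.Subgraph) : Prop :=
  (∀ C ∈ 𝒞, IsCycleSub C) ∧ ∀ e ∈ G.edgeSet, ∃ C ∈ 𝒞, e ∈ C.edgeSet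

/-- The length of a family of cycles: the sum of the numbers of edges of its members. -/
noncomputable def coverLength {G : SimpleGraph V} (𝒞 : Multiset G.Subgraph) : ℕ :=
  (𝒞.map fun C => C.edgeSet.ncard).sum

/-- The weight of an edge w.r.t. a family of cycles: the number of members containing it. -/
noncomputable def edgeWeight {G : SimpleGraph V} (𝒞 : Multiset G.Subgraph) (e : Sym2 V) : ℕ :=
  (𝒞.map fun C => if e ∈ C.edgeSet then 1 else 0).sum

/-- A cycle double cover: a family of cycles covering every edge exactly twice. -/
def IsCDC (G : SimpleGraph V) (𝒞 : Multiset G.Subgraph) : Prop :=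
  (∀ C ∈ 𝒞, IsCycleSub C) ∧ ∀ e ∈ G.edgeSet, edgeWeight 𝒞 e = 2

/-- The length of a shortest cycle cover of `G`. -/
noncomputable def scc (G : SimpleGraph V) : ℕ :=
  sInf {L : ℕ | ∃ 𝒞 : Multiset G.Subgraph, IsCycleCover G 𝒞 ∧ coverLength 𝒞 = L}

/-- A cubic graph: every vertex has degree 3. -/
def IsCubic (G : SimpleGraph V) : Prop := ∀ v : V, (G.neighborSet v).ncard = 3

/-- A bridgeless graph: no cut edge. -/
def Bridgeless (G : SimpleGraph V) : Prop := ∀ e ∈ G.edgeSet, ¬ G.IsBridge e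

/-- Vertices of the Petersen graph: 2-element subsets of a 5-element set. -/
abbrev PetersenVert : Type := {s : Finset (Fin 5) // s.card = 2}

/-- The Petersen graph as the Kneser graph on 2-element subsets of a 5-element set,
two subsets adjacent when disjoint. -/
def Petersen : SimpleGraph PetersenVert where
  Adj a b := Disjoint (a : Finset (Fin 5)) (b : Finset (Fin 5))
  symm := ⟨fun a b h => h.symm⟩
  loopless := ⟨fun a h => by
    have h0 : (a : Finset (Fin 5)) = ∅ := disjoint_self.mp h
    have h2 := a.2
    rw [h0] at h2
    simp at h2⟩

/-- A Petersen-colouring of a cubic graph `G`: a map from edges of `G` to edges of the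
Petersen graph such that the three edges at any vertex of `G` are mapped to three
distinct edges sharing a common vertex of the Petersen graph. -/
def IsPetersenColoring (G : SimpleGraph V) (c : Sym2 V → Sym2 PetersenVert) : Prop :=
  (∀ e ∈ G.edgeSet, c e ∈ Petersen.edgeSet) ∧
  ∀ (v : V) (e₁ e₂ e₃ : Sym2 V), e₁ ∈ G.edgeSet → e₂ ∈ G.edgeSet → e₃ ∈ G.edgeSet →
    v ∈ e₁ → v ∈ e₂ → v ∈ e₃ → e₁ ≠ e₂ → e₁ ≠ e₃ → e₂ ≠ e₃ →
    c e₁ ≠ c e₂ ∧ c e₁ ≠ c e₃ ∧ c e₂ ≠ c e₃ ∧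
      ∃ u : PetersenVert, u ∈ c e₁ ∧ u ∈ c e₂ ∧ u ∈ c e₃

/-
A Petersen-colouring `c` of a cubic graph `G` maps the three edges at each vertex of `G`
bijectively onto the three edges at some vertex of the Petersen graph `P`. Hence the edges of
`G` whose colours lie in a 2-regular subgraph of `P` form a 2-regular subgraph of `G`, whose
components are cycles: a cycle cover of `P` pulls back to a cycle cover of `G` covering each
edge `e` as often as `c e` is covered in `P`.

`P` has cycle covers by three 5-cycles and one 6-cycle, of length `21 = 7/5 * 15`. Ten such
covers together cover every edge of `P` exactly 14 times, so their pullbacks have total length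
`14 m`, and the shortest of them has length at most `7 m / 5`.
-/

open SimpleGraph

section EdgeWeight

variable {G : SimpleGraph V}

lemma edgeWeight_cons (C : G.Subgraph) (𝒞 : Multiset G.Subgraph) (e : Sym2 V) :
    edgeWeight (C ::ₘ 𝒞) e = (if e ∈ C.edgeSet then 1 else 0) + edgeWeight 𝒞 e := by
  simp only [edgeWeight, Multiset.map_cons, Multiset.sum_cons]

lemma edgeWeight_singleton (C : G.Subgraph) (e : Sym2 V) :
    edgeWeight {C} e = if e ∈ C.edgeSet then 1 else 0 := by
  simp [edgeWeight]

lemma edgeWeight_add (𝒞 𝒟 : Multiset G.Subgraph) (e : Sym2 V) :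
    edgeWeight (𝒞 + 𝒟) e = edgeWeight 𝒞 e + edgeWeight 𝒟 e := by
  simp only [edgeWeight, Multiset.map_add, Multiset.sum_add]

lemma edgeWeight_pos_iff {𝒞 : Multiset G.Subgraph} {e : Sym2 V} :
    0 < edgeWeight 𝒞 e ↔ ∃ C ∈ 𝒞, e ∈ C.edgeSet := by
  simp [edgeWeight, pos_iff_ne_zero, Multiset.sum_eq_zero_iff]

lemma coverLength_eq_sum_edgeWeight [Fintype V] (𝒞 : Multiset G.Subgraph) :
    coverLength 𝒞 = ∑ e ∈ G.edgeSet.toFinset, edgeWeight 𝒞 e := by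
  induction 𝒞 using Multiset.induction_on with
  | empty => simp [coverLength, edgeWeight]
  | cons C 𝒞 ih =>
    have hC : C.edgeSet.ncard = ∑ e ∈ G.edgeSet.toFinset, if e ∈ C.edgeSet then 1 else 0 := by
      rw [Finset.sum_boole, Nat.cast_id, ← Set.ncard_coe_finset]
      congr 1
      ext e
      simpa using fun h => C.edgeSet_subset h
    simp only [coverLength, Multiset.map_cons, Multiset.sum_cons] at ih ⊢
    simp only [edgeWeight_cons, Finset.sum_add_distrib, ← hC, ← ih]

end EdgeWeight

section Decomposition

variable {G : SimpleGraph V}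

def IsTwoRegular (C : G.Subgraph) : Prop :=
  ∀ v ∈ C.verts, (C.neighborSet v).ncard = 2

variable {D : G.Subgraph}

lemma adj_coeSubgraph_toSubgraph (K : D.coe.ConnectedComponent) {a b : V} :
    (Subgraph.coeSubgraph K.toSubgraph).Adj a b ↔
      ∃ h : D.Adj a b, D.coe.connectedComponentMk ⟨a, D.edge_vert h⟩ = K := by
  simp only [Subgraph.coeSubgraph_adj, Subgraph.induce_adj, Subgraph.top_adj,
    ConnectedComponent.mem_supp_iff]
  constructor
  · rintro ⟨_, _, hKa, _, hab⟩
    exact ⟨hab, hKa⟩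
  · rintro ⟨hab, hKa⟩
    refine ⟨D.edge_vert hab, D.edge_vert hab.symm, hKa, ?_, hab⟩
    rw [← hKa]
    exact ConnectedComponent.connectedComponentMk_eq_of_adj (G := D.coe) hab.symm

lemma neighborSet_coeSubgraph_toSubgraph {v : V} (hv : v ∈ D.verts) :
    (Subgraph.coeSubgraph (D.coe.connectedComponentMk ⟨v, hv⟩).toSubgraph).neighborSet v =
      D.neighborSet v := by
  ext w
  simp only [Subgraph.mem_neighborSet, adj_coeSubgraph_toSubgraph]
  exact ⟨fun ⟨h, _⟩ => h, fun h => ⟨h, trivial⟩⟩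

lemma IsTwoRegular.isCycleSub_component (hD : IsTwoRegular D) (K : D.coe.ConnectedComponent) :
    IsCycleSub (Subgraph.coeSubgraph K.toSubgraph) := by
  refine ⟨K.connected_toSubgraph.coeSubgraph, ?_⟩
  rintro v ⟨⟨v, hv⟩, hK, rfl⟩
  have hK : D.coe.connectedComponentMk ⟨v, hv⟩ = K := hK
  subst hK
  rw [Subgraph.hom_apply, neighborSet_coeSubgraph_toSubgraph]
  exact hD v hv

lemma IsTwoRegular.exists_cycles_edgeWeight_eq [Finite V] (hD : IsTwoRegular D) :
    ∃ 𝒞 : Multiset G.Subgraph, (∀ C ∈ 𝒞, IsCycleSub C) ∧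
      ∀ e, edgeWeight 𝒞 e = edgeWeight {D} e := by
  have : Fintype D.coe.ConnectedComponent := Fintype.ofFinite _
  refine ⟨Finset.univ.val.map fun K : D.coe.ConnectedComponent =>
    Subgraph.coeSubgraph K.toSubgraph, ?_, ?_⟩
  · simp only [Multiset.mem_map, Finset.mem_val, Finset.mem_univ, true_and]
    rintro _ ⟨K, rfl⟩
    exact hD.isCycleSub_component K
  · intro e
    induction e with | _ a b => ?_
    rw [edgeWeight_singleton, edgeWeight, Multiset.map_map, ← Finset.sum_eq_multiset_sum]
    simp only [Function.comp_apply, Subgraph.mem_edgeSet, adj_coeSubgraph_toSubgraph]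
    by_cases hab : D.Adj a b <;> simp [hab]

lemma exists_cycles_edgeWeight_eq_of_isTwoRegular [Finite V] {𝒟 : Multiset G.Subgraph}
    (h𝒟 : ∀ D ∈ 𝒟, IsTwoRegular D) :
    ∃ 𝒞 : Multiset G.Subgraph, (∀ C ∈ 𝒞, IsCycleSub C) ∧
      ∀ e, edgeWeight 𝒞 e = edgeWeight 𝒟 e := by
  induction 𝒟 using Multiset.induction_on with
  | empty => exact ⟨0, by simp, fun _ => rfl⟩
  | cons D 𝒟 ih =>
    obtain ⟨𝒞, h𝒞, hw⟩ := ih fun D' hD' => h𝒟 D' (Multiset.mem_cons_of_mem hD')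
    obtain ⟨𝒞D, h𝒞D, hwD⟩ := (h𝒟 D (Multiset.mem_cons_self D 𝒟)).exists_cycles_edgeWeight_eq
    refine ⟨𝒞D + 𝒞, fun C hC => (Multiset.mem_add.mp hC).elim (h𝒞D C) (h𝒞 C), fun e => ?_⟩
    rw [edgeWeight_add, hwD, hw, edgeWeight_singleton, edgeWeight_cons]

end Decomposition

section HColoring

variable {W : Type*} {G : SimpleGraph V} {H : SimpleGraph W} {c : Sym2 V → Sym2 W}

def edgePreimage (G : SimpleGraph V) (c : Sym2 V → Sym2 W) (S : Set (Sym2 W)) : G.Subgraph where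
  verts := {v | ∃ w, G.Adj v w ∧ c s(v, w) ∈ S}
  Adj a b := G.Adj a b ∧ c s(a, b) ∈ S
  adj_sub h := h.1
  edge_vert h := ⟨_, h⟩
  symm := ⟨fun _ _ h => ⟨h.1.symm, by rw [Sym2.eq_swap]; exact h.2⟩⟩

lemma mem_edgeSet_edgePreimage {S : Set (Sym2 W)} {e : Sym2 V} :
    e ∈ (edgePreimage G c S).edgeSet ↔ e ∈ G.edgeSet ∧ c e ∈ S := by
  induction e with | _ a b => exact Subgraph.mem_edgeSet

def IsHColoring (G : SimpleGraph V) (H : SimpleGraph W) (c : Sym2 V → Sym2 W) : Prop :=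
  ∀ v, ∃ u, Set.BijOn (fun w => c s(v, w)) (G.neighborSet v) (H.incidenceSet u)

lemma ncard_incidenceSet_eq_ncard_neighborSet (C : H.Subgraph) (u : W) :
    (C.incidenceSet u).ncard = (C.neighborSet u).ncard := by
  have : C.incidenceSet u = (fun m => s(u, m)) '' C.neighborSet u := by
    ext e
    induction e with | _ a b => ?_
    simp only [Subgraph.incidenceSet, Set.mem_ofPred_eq, Subgraph.mem_edgeSet, Sym2.mem_iff,
      Set.mem_image, Subgraph.mem_neighborSet, Sym2.eq_iff]
    constructor
    · rintro ⟨hab, rfl | rfl⟩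
      exacts [⟨b, hab, Or.inl ⟨rfl, rfl⟩⟩, ⟨a, hab.symm, Or.inr ⟨rfl, rfl⟩⟩]
    · rintro ⟨m, hm, ⟨rfl, rfl⟩ | ⟨rfl, rfl⟩⟩
      exacts [⟨hm, Or.inl rfl⟩, ⟨hm.symm, Or.inr rfl⟩]
  rw [this, Set.ncard_image_of_injective _ fun _ _ h => Sym2.congr_right.mp h]

lemma IsHColoring.mem_edgeSet (hc : IsHColoring G H c) {e : Sym2 V} (he : e ∈ G.edgeSet) :
    c e ∈ H.edgeSet := by
  induction e with
  | _ a b =>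
    obtain ⟨u, hbij⟩ := hc a
    exact (hbij.mapsTo he).1

lemma IsHColoring.isTwoRegular_edgePreimage (hc : IsHColoring G H c) {C : H.Subgraph}
    (hC : IsTwoRegular C) : IsTwoRegular (edgePreimage G c C.edgeSet) := by
  rintro v ⟨w₀, hw₀, hcw₀⟩
  obtain ⟨u, hbij⟩ := hc v
  have hu : u ∈ C.verts := Subgraph.mem_verts_of_mem_edge hcw₀ (hbij.mapsTo hw₀).2
  have himage : (fun w => c s(v, w)) '' (G.neighborSet v ∩ (fun w => c s(v, w)) ⁻¹' C.edgeSet) =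
      C.incidenceSet u := by
    rw [Set.image_inter_preimage, hbij.image_eq]
    ext e
    exact ⟨fun ⟨he, hCe⟩ => ⟨hCe, he.2⟩, fun ⟨hCe, hue⟩ => ⟨⟨C.edgeSet_subset hCe, hue⟩, hCe⟩⟩
  change (G.neighborSet v ∩ (fun w => c s(v, w)) ⁻¹' C.edgeSet).ncard = 2
  rw [← (hbij.injOn.mono Set.inter_subset_left).ncard_image, himage,
    ncard_incidenceSet_eq_ncard_neighborSet]
  exact hC u hu

lemma edgeWeight_map_edgePreimage {L : Multiset H.Subgraph} {e : Sym2 V} (he : e ∈ G.edgeSet) :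
    edgeWeight (L.map fun C => edgePreimage G c C.edgeSet) e = edgeWeight L (c e) := by
  simp [edgeWeight, mem_edgeSet_edgePreimage, he]

lemma IsHColoring.scc_le [Fintype V] (hc : IsHColoring G H c) {L : Multiset H.Subgraph}
    (hreg : ∀ C ∈ L, IsTwoRegular C) (hcov : ∀ f ∈ H.edgeSet, ∃ C ∈ L, f ∈ C.edgeSet) :
    scc G ≤ ∑ e ∈ G.edgeSet.toFinset, edgeWeight L (c e) := by
  obtain ⟨𝒞, hcyc, hw⟩ := exists_cycles_edgeWeight_eq_of_isTwoRegular
    (𝒟 := L.map fun C => edgePreimage G c C.edgeSet)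
    (by simpa using fun C hC => hc.isTwoRegular_edgePreimage (hreg C hC))
  have hw' : ∀ e ∈ G.edgeSet, edgeWeight 𝒞 e = edgeWeight L (c e) := fun e he =>
    (hw e).trans (edgeWeight_map_edgePreimage he)
  have hcover : IsCycleCover G 𝒞 := ⟨hcyc, fun e he => edgeWeight_pos_iff.mp <| by
    rw [hw' e he]; exact edgeWeight_pos_iff.mpr (hcov _ (hc.mem_edgeSet he))⟩
  calc scc G ≤ coverLength 𝒞 := Nat.sInf_le ⟨𝒞, hcover, rfl⟩
    _ = ∑ e ∈ G.edgeSet.toFinset, edgeWeight 𝒞 e := coverLength_eq_sum_edgeWeight 𝒞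
    _ = _ := Finset.sum_congr rfl fun e he => hw' e (Set.mem_toFinset.mp he)

theorem IsHColoring.card_mul_scc_le [Fintype V] {ι : Type*} [Fintype ι] (hc : IsHColoring G H c)
    (𝓕 : ι → Multiset H.Subgraph) (hreg : ∀ i, ∀ C ∈ 𝓕 i, IsTwoRegular C)
    (hcov : ∀ i, ∀ f ∈ H.edgeSet, ∃ C ∈ 𝓕 i, f ∈ C.edgeSet) {w : ℕ}
    (hw : ∀ f ∈ H.edgeSet, ∑ i, edgeWeight (𝓕 i) f = w) :
    Fintype.card ι * scc G ≤ w * G.edgeSet.ncard :=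
  calc Fintype.card ι * scc G = ∑ _ : ι, scc G := by simp
    _ ≤ ∑ i, ∑ e ∈ G.edgeSet.toFinset, edgeWeight (𝓕 i) (c e) :=
      Finset.sum_le_sum fun i _ => hc.scc_le (hreg i) (hcov i)
    _ = ∑ e ∈ G.edgeSet.toFinset, ∑ i, edgeWeight (𝓕 i) (c e) := Finset.sum_comm
    _ = ∑ _ ∈ G.edgeSet.toFinset, w :=
      Finset.sum_congr rfl fun e he => hw _ (hc.mem_edgeSet (Set.mem_toFinset.mp he))
    _ = w * G.edgeSet.ncard := by
      rw [Finset.sum_const, smul_eq_mul, mul_comm, Set.ncard_eq_toFinset_card']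

end HColoring

section CycleSubgraph

variable {W : Type*} {H : SimpleGraph W}

def cycleEdges (l : List W) : List (Sym2 W) :=
  List.zipWith (fun a b => s(a, b)) l (l.rotate 1)

def cycleSubgraph (H : SimpleGraph W) (l : List W) : H.Subgraph :=
  edgePreimage H id {f | f ∈ cycleEdges l}

lemma isTwoRegular_cycleSubgraph [Fintype W] [DecidableEq W] [DecidableRel H.Adj] {l : List W}
    (h : ∀ u, (∃ m, H.Adj u m ∧ s(u, m) ∈ cycleEdges l) →
      (Finset.univ.filter fun m => H.Adj u m ∧ s(u, m) ∈ cycleEdges l).card = 2) :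
    IsTwoRegular (cycleSubgraph H l) := by
  intro u hu
  have : (cycleSubgraph H l).neighborSet u =
      ↑(Finset.univ.filter fun m => H.Adj u m ∧ s(u, m) ∈ cycleEdges l) := by
    ext m
    simp [cycleSubgraph, edgePreimage]
  rw [this, Set.ncard_coe_finset]
  exact h u hu

lemma exists_mem_cycleSubgraphs_iff {ls : List (List W)} {f : Sym2 W} (hf : f ∈ H.edgeSet) :
    (∃ C ∈ (ls.map (cycleSubgraph H) : Multiset H.Subgraph), f ∈ C.edgeSet) ↔
      ∃ l ∈ ls, f ∈ cycleEdges l := by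
  simp [cycleSubgraph, mem_edgeSet_edgePreimage, hf]

lemma edgeWeight_cycleSubgraphs [DecidableEq W] {ls : List (List W)} {f : Sym2 W}
    (hf : f ∈ H.edgeSet) :
    edgeWeight (ls.map (cycleSubgraph H) : Multiset H.Subgraph) f =
      ls.countP (f ∈ cycleEdges ·) := by
  induction ls with
  | nil => rfl
  | cons l ls ih =>
    rw [List.map_cons, ← Multiset.cons_coe, edgeWeight_cons, ih, List.countP_cons]
    simp [cycleSubgraph, mem_edgeSet_edgePreimage, hf, add_comm]

end CycleSubgraph

section Petersen

variable {G : SimpleGraph V} {c : Sym2 V → Sym2 PetersenVert}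

instance : DecidableRel Petersen.Adj := fun a b =>
  inferInstanceAs (Decidable (Disjoint (a : Finset (Fin 5)) (b : Finset (Fin 5))))

lemma ncard_incidenceSet_petersen (u : PetersenVert) : (Petersen.incidenceSet u).ncard = 3 := by
  rw [Set.ncard_eq_toFinset_card', ← incidenceFinset, card_incidenceFinset_eq_degree]
  revert u
  decide +kernel

lemma IsPetersenColoring.isHColoring (hcubic : IsCubic G) (hcol : IsPetersenColoring G c) :
    IsHColoring G Petersen c := by
  intro v
  obtain ⟨w₁, w₂, w₃, h₁₂, h₁₃, h₂₃, hN⟩ := Set.ncard_eq_three.mp (hcubic v)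
  have hadj : ∀ w ∈ G.neighborSet v, s(v, w) ∈ G.edgeSet := fun _ hw => hw
  have hmem : w₁ ∈ G.neighborSet v ∧ w₂ ∈ G.neighborSet v ∧ w₃ ∈ G.neighborSet v := by
    simp [hN]
  have hne : ∀ {a b : V}, a ≠ b → s(v, a) ≠ s(v, b) := fun h h' => h (Sym2.congr_right.mp h')
  obtain ⟨hc₁₂, hc₁₃, hc₂₃, u, hu₁, hu₂, hu₃⟩ :=
    hcol.2 v _ _ _ (hadj _ hmem.1) (hadj _ hmem.2.1) (hadj _ hmem.2.2)
      (Sym2.mem_mk_left _ _) (Sym2.mem_mk_left _ _) (Sym2.mem_mk_left _ _)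
      (hne h₁₂) (hne h₁₃) (hne h₂₃)
  have hmaps : Set.MapsTo (fun w => c s(v, w)) (G.neighborSet v) (Petersen.incidenceSet u) := by
    rw [hN]
    rintro w (rfl | rfl | rfl)
    exacts [⟨hcol.1 _ (hadj _ hmem.1), hu₁⟩, ⟨hcol.1 _ (hadj _ hmem.2.1), hu₂⟩,
      ⟨hcol.1 _ (hadj _ hmem.2.2), hu₃⟩]
  have hinj : Set.InjOn (fun w => c s(v, w)) (G.neighborSet v) := by
    rw [hN]
    rintro x (rfl | rfl | rfl) y (rfl | rfl | rfl) hxy <;>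
      first | rfl | exact absurd hxy ‹_› | exact absurd hxy.symm ‹_›
  have himage : (fun w => c s(v, w)) '' G.neighborSet v = Petersen.incidenceSet u :=
    Set.eq_of_subset_of_ncard_le hmaps.image_subset
      (by rw [hinj.ncard_image, hcubic v, ncard_incidenceSet_petersen]) (Set.toFinite _)
  exact ⟨u, himage ▸ hinj.bijOn_image⟩

def pv (i j : Fin 5) (h : i ≠ j := by decide) : PetersenVert := ⟨{i, j}, Finset.card_pair h⟩

def petersenCycles : Fin 10 → List (List PetersenVert) := ![
  [[pv 0 1, pv 2 3, pv 0 4, pv 1 2, pv 3 4],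
   [pv 0 1, pv 2 3, pv 1 4, pv 0 3, pv 2 4],
   [pv 0 1, pv 2 4, pv 1 3, pv 0 2, pv 3 4],
   [pv 0 2, pv 1 3, pv 0 4, pv 1 2, pv 0 3, pv 1 4]],
  [[pv 0 1, pv 2 3, pv 1 4, pv 0 2, pv 3 4],
   [pv 0 2, pv 1 3, pv 0 4, pv 1 2, pv 3 4],
   [pv 0 2, pv 1 3, pv 2 4, pv 0 3, pv 1 4],
   [pv 0 1, pv 2 3, pv 0 4, pv 1 2, pv 0 3, pv 2 4]],
  [[pv 0 1, pv 2 3, pv 0 4, pv 1 2, pv 3 4],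
   [pv 0 2, pv 1 4, pv 0 3, pv 1 2, pv 3 4],
   [pv 0 3, pv 1 2, pv 0 4, pv 1 3, pv 2 4],
   [pv 0 1, pv 2 3, pv 1 4, pv 0 2, pv 1 3, pv 2 4]],
  [[pv 0 1, pv 2 3, pv 0 4, pv 1 3, pv 2 4],
   [pv 0 1, pv 2 3, pv 1 4, pv 0 2, pv 3 4],
   [pv 0 3, pv 1 2, pv 0 4, pv 2 3, pv 1 4],
   [pv 0 2, pv 1 3, pv 2 4, pv 0 3, pv 1 2, pv 3 4]],
  [[pv 0 1, pv 2 3, pv 1 4, pv 0 3, pv 2 4],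
   [pv 0 2, pv 1 3, pv 0 4, pv 2 3, pv 1 4],
   [pv 0 2, pv 1 4, pv 0 3, pv 1 2, pv 3 4],
   [pv 0 1, pv 2 4, pv 1 3, pv 0 4, pv 1 2, pv 3 4]],
  [[pv 0 1, pv 2 3, pv 0 4, pv 1 3, pv 2 4],
   [pv 0 1, pv 2 4, pv 0 3, pv 1 2, pv 3 4],
   [pv 0 2, pv 1 3, pv 2 4, pv 0 3, pv 1 4],
   [pv 0 2, pv 1 4, pv 2 3, pv 0 4, pv 1 2, pv 3 4]],
  [[pv 0 1, pv 2 3, pv 0 4, pv 1 3, pv 2 4],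
   [pv 0 2, pv 1 3, pv 0 4, pv 1 2, pv 3 4],
   [pv 0 3, pv 1 2, pv 0 4, pv 2 3, pv 1 4],
   [pv 0 1, pv 2 4, pv 0 3, pv 1 4, pv 0 2, pv 3 4]],
  [[pv 0 1, pv 2 4, pv 0 3, pv 1 2, pv 3 4],
   [pv 0 2, pv 1 3, pv 2 4, pv 0 3, pv 1 4],
   [pv 0 3, pv 1 2, pv 0 4, pv 2 3, pv 1 4],
   [pv 0 1, pv 2 3, pv 0 4, pv 1 3, pv 0 2, pv 3 4]],
  [[pv 0 1, pv 2 4, pv 1 3, pv 0 2, pv 3 4],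
   [pv 0 2, pv 1 3, pv 0 4, pv 2 3, pv 1 4],
   [pv 0 3, pv 1 2, pv 0 4, pv 1 3, pv 2 4],
   [pv 0 1, pv 2 3, pv 1 4, pv 0 3, pv 1 2, pv 3 4]],
  [[pv 0 1, pv 2 3, pv 1 4, pv 0 2, pv 3 4],
   [pv 0 1, pv 2 4, pv 0 3, pv 1 2, pv 3 4],
   [pv 0 2, pv 1 3, pv 0 4, pv 1 2, pv 3 4],
   [pv 0 3, pv 1 4, pv 2 3, pv 0 4, pv 1 3, pv 2 4]]]

def petersenCovers (i : Fin 10) : Multiset Petersen.Subgraph :=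
  (petersenCycles i).map (cycleSubgraph Petersen)

lemma isTwoRegular_petersenCovers (i : Fin 10) : ∀ C ∈ petersenCovers i, IsTwoRegular C := by
  simp only [petersenCovers, Multiset.mem_coe, List.mem_map]
  rintro _ ⟨l, hl, rfl⟩
  refine isTwoRegular_cycleSubgraph ?_
  revert i l
  decide +kernel

lemma petersenCovers_cover (i : Fin 10) :
    ∀ f ∈ Petersen.edgeSet, ∃ C ∈ petersenCovers i, f ∈ C.edgeSet := by
  intro f hf
  rw [petersenCovers, exists_mem_cycleSubgraphs_iff hf]
  induction f with | _ a b => ?_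
  revert i a b
  decide +kernel

lemma sum_edgeWeight_petersenCovers :
    ∀ f ∈ Petersen.edgeSet, ∑ i, edgeWeight (petersenCovers i) f = 14 := by
  intro f hf
  simp only [petersenCovers, edgeWeight_cycleSubgraphs hf]
  induction f with | _ a b => ?_
  revert a b
  decide +kernel

end Petersen

/-- A cubic graph with a Petersen-colouring has `scc G ≤ (7/5)m`. -/
theorem statement16 [Fintype V] (G : SimpleGraph V) (hcubic : IsCubic G)
    (hcol : ∃ c : Sym2 V → Sym2 PetersenVert, IsPetersenColoring G c) :
    5 * scc G ≤ 7 * G.edgeSet.ncard := by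
  obtain ⟨c, hc⟩ := hcol
  have h := (hc.isHColoring hcubic).card_mul_scc_le petersenCovers isTwoRegular_petersenCovers
    petersenCovers_cover sum_edgeWeight_petersenCovers
  rw [Fintype.card_fin] at h
  omega

end ShortCycleCovers
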